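/- Let M ⊆ ℝ^D be an embedded m-dimensional manifold with the Euclidean-induced metric, ρ smooth and positive, and define the weighted Fermat Laplacian Δ_{s,p} = -ρ_p^{-s} div_p(ρ_p^s ∇_p), where ρ_p = ρ^p, div_p and ∇_p are the divergence and gradient for the metric g_p = ρ^{-α}g with α = 2(p-1)/m. Then Δ_{s,p} f = -ρ^{2(p-1)/m} [Δ f + (p(s-1) + 1 + 2(p-1)/m) (∇ρ/ρ) · ∇ f], where Δ and ∇ are the Laplace-Beltrami operator and gradient of the induced Euclidean metric. -/

import Mathlib

open RealInnerProductSpace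

noncomputable section

/-- Coordinate divergence of a vector field on `ℝ^m` (trace of the derivative). -/
def ediv {m : ℕ} (W : EuclideanSpace ℝ (Fin m) → EuclideanSpace ℝ (Fin m))
    (x : EuclideanSpace ℝ (Fin m)) : ℝ :=
  ∑ i, fderiv ℝ W x (EuclideanSpace.single i (1:ℝ)) i

/-- Euclidean Laplace–Beltrami operator `Δ f = div(∇f)` on a flat chart. -/
def elap {m : ℕ} (f : EuclideanSpace ℝ (Fin m) → ℝ) (x : EuclideanSpace ℝ (Fin m)) : ℝ :=
  ediv (fun y => gradient f y) x

/-- Fermat `s`-weighted Laplacian in Euclidean coordinates: with `ρ_p = ρ^p`,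
`∇_p f = ρ^α ∇f`, `div_p W = ρ^{p-1} div(ρ^{1-p} W)` and `α = 2(p-1)/m`, the operator
`Δ_{s,p} f = -ρ_p^{-s} div_p(ρ_p^s ∇_p f)` equals
`-ρ^{2(p-1)/m} [Δf + (p(s-1) + 1 + 2(p-1)/m)(∇ρ/ρ)·∇f]`. -/
theorem stmt9 {m : ℕ} (hm : 0 < m) (p s : ℝ)
    (ρ : EuclideanSpace ℝ (Fin m) → ℝ) (hρpos : ∀ x, 0 < ρ x) (hρ : ContDiff ℝ (⊤ : ℕ∞) ρ)
    (f : EuclideanSpace ℝ (Fin m) → ℝ) (hf : ContDiff ℝ (⊤ : ℕ∞) f)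
    (x : EuclideanSpace ℝ (Fin m)) :
    -((ρ x ^ p) ^ (-s)) *
        (ρ x ^ (p - 1) *
          ediv (fun y => ρ y ^ (1 - p) •
            ((ρ y ^ p) ^ s • (ρ y ^ (2 * (p - 1) / (m : ℝ)) • gradient f y))) x)
      = -(ρ x ^ (2 * (p - 1) / (m : ℝ))) *
          (elap f x + (p * (s - 1) + 1 + 2 * (p - 1) / (m : ℝ)) *
            (⟪gradient ρ x, gradient f x⟫ / ρ x)) := by
  set α : ℝ := 2 * (p - 1) / (m : ℝ) with hα
  set b : ℝ := p * (s - 1) + 1 + α with hb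
  -- rewrite the inner vector field
  have hfun : (fun y => ρ y ^ (1 - p) • ((ρ y ^ p) ^ s • (ρ y ^ α • gradient f y)))
      = fun y => ρ y ^ b • gradient f y := by
    funext y
    rw [smul_smul, smul_smul]
    congr 1
    rw [← Real.rpow_mul (hρpos y).le, ← Real.rpow_add (hρpos y), ← Real.rpow_add (hρpos y)]
    congr 1
    ring
  rw [hfun]
  -- differentiability of the gradient of f
  have hdf : Differentiable ℝ (fderiv ℝ f) :=
    (contDiff_infty_iff_fderiv.mp (hf.of_le (by simp))).2.differentiable (by simp)
  have hgradf : Differentiable ℝ (fun y => gradient f y) := by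
    have hL : Differentiable ℝ (fun y =>
        (InnerProductSpace.toDual ℝ
          (EuclideanSpace ℝ (Fin m))).symm.toContinuousLinearEquiv (fderiv ℝ f y)) :=
      ((InnerProductSpace.toDual ℝ
        (EuclideanSpace ℝ (Fin m))).symm.toContinuousLinearEquiv.differentiable).comp hdf
    simpa only [LinearIsometryEquiv.coe_toContinuousLinearEquiv, gradient] using hL
  -- derivative of the scalar factor
  have hρd : HasFDerivAt ρ (fderiv ℝ ρ x) x := (hρ.differentiable (by simp) x).hasFDerivAt
  have hc : HasFDerivAt (fun y => ρ y ^ b) ((b * ρ x ^ (b - 1)) • fderiv ℝ ρ x) x :=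
    hρd.rpow_const (Or.inl (hρpos x).ne')
  have hV : HasFDerivAt (fun y => gradient f y) (fderiv ℝ (fun y => gradient f y) x) x :=
    (hgradf x).hasFDerivAt
  have hprod := hc.smul hV
  have hfd := hprod.fderiv
  -- inner product identities
  have hgrad_apply : ∀ v : EuclideanSpace ℝ (Fin m), fderiv ℝ ρ x v = ⟪gradient ρ x, v⟫ := by
    intro v
    rw [gradient, InnerProductSpace.toDual_symm_apply]
  have hinner : ∑ i, fderiv ℝ ρ x (EuclideanSpace.single i (1:ℝ)) * gradient f x i
      = ⟪gradient ρ x, gradient f x⟫ := by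
    rw [PiLp.inner_apply]
    refine Finset.sum_congr rfl fun i _ => ?_
    rw [hgrad_apply]
    simp [PiLp.inner_apply, EuclideanSpace.single_apply, mul_comm]
    rw [hgrad_apply, EuclideanSpace.inner_single_right]
    simp [mul_comm]
  -- compute the divergence of the product
  have hediv : ediv (fun y => ρ y ^ b • gradient f y) x
      = ρ x ^ b * elap f x + (b * ρ x ^ (b - 1)) * ⟪gradient ρ x, gradient f x⟫ := by
    unfold ediv
    rw [show (fun y => ρ y ^ b • gradient f y) = ((fun y => ρ y ^ b) • fun y => gradient f y) from rfl, hfd]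
    simp only [ContinuousLinearMap.add_apply, ContinuousLinearMap.coe_smul', Pi.smul_apply,
      ContinuousLinearMap.smulRight_apply, PiLp.add_apply, PiLp.smul_apply, smul_eq_mul]
    rw [Finset.sum_add_distrib, ← Finset.mul_sum]
    congr 1
    rw [← hinner, Finset.mul_sum]
    exact Finset.sum_congr rfl fun i _ => by ring
  rw [hediv]
  -- final algebra with rpow identities
  have hr := hρpos x
  set I : ℝ := ⟪gradient ρ x, gradient f x⟫ with hI
  set E : ℝ := elap f x with hE
  have h1 : (ρ x ^ p) ^ (-s) * (ρ x ^ (p - 1) * ρ x ^ b) = ρ x ^ α := by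
    rw [← Real.rpow_mul hr.le, ← Real.rpow_add hr, ← Real.rpow_add hr]
    congr 1
    rw [hb]; ring
  have h2 : (ρ x ^ p) ^ (-s) * (ρ x ^ (p - 1) * ρ x ^ (b - 1)) = ρ x ^ α / ρ x := by
    rw [← Real.rpow_mul hr.le, ← Real.rpow_add hr, ← Real.rpow_add hr]
    have he : p * -s + (p - 1 + (b - 1)) = α - 1 := by rw [hb]; ring
    rw [he, Real.rpow_sub hr, Real.rpow_one]
  have hne : ρ x ≠ 0 := hr.ne'
  linear_combination (-E) * h1 + (-(b * I)) * h2
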